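/- arXiv:1506.02792 — 3 statements merged into one kernel-verified Lean document; each statement's English description precedes it below -/
import Mathlib

section
/- For the concave maximization problem: maximize Σ_{i=1}^N p(1-p)^{i-1}·(1/2)log(1+E_i) subject to E_i ≥ 0 and Σ_{i=1}^N E_i ≤ B̄, if Ñ < N is the smallest positive integer satisfying 1 > (1-p)^{Ñ}[1 + p(B̄+Ñ)], then the allocation E_i = (Ñ+B̄)·p(1-p)^{i-1}/(1-(1-p)^{Ñ}) − 1 for i ≤ Ñ and E_i = 0 for i > Ñ is feasible (each E_i ≥ 0 and Σ E_i = B̄). -/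
/-!
Write `q = 1 - p`. The weights `p q^(i-1)`, `i ≤ Ñ`, sum to `1 - q^Ñ`, so the allocation sums to
`(Ñ + B̄) - Ñ = B̄`. The allocation is decreasing in `i`, so it is nonnegative as soon as its last
entry is. By minimality of `Ñ` (or trivially, for `Ñ = 1`) we have `q^(Ñ-1) [1 + p(B̄ + Ñ - 1)] ≥ 1`,
which is a rearrangement of `1 - q^Ñ ≤ (Ñ + B̄) p q^(Ñ-1)`, i.e. of `E_Ñ ≥ 0`.
-/

open Finset

namespace OptimalAllocation

noncomputable def allocation (p B : ℝ) (n i : ℕ) : ℝ :=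
  if i ≤ n then ((n : ℝ) + B) * (p * (1 - p) ^ (i - 1)) / (1 - (1 - p) ^ n) - 1 else 0

theorem sum_Icc_mul_one_sub_pow (p : ℝ) (n : ℕ) :
    ∑ i ∈ Icc 1 n, p * (1 - p) ^ (i - 1) = 1 - (1 - p) ^ n := by
  have hgeom := geom_sum_mul (1 - p) n
  rw [← Ico_add_one_right_eq_Icc, sum_Ico_eq_sum_range, ← mul_sum]
  simp only [add_tsub_cancel_right, add_tsub_cancel_left]
  linear_combination -hgeom

theorem one_sub_pow_succ_le (p B : ℝ) (m : ℕ) (h : 1 ≤ (1 - p) ^ m * (1 + p * (B + m))) :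
    1 - (1 - p) ^ (m + 1) ≤ ((m + 1 : ℕ) + B) * (p * (1 - p) ^ m) := by
  push_cast
  linear_combination h

theorem allocation_nonneg {p B : ℝ} {n i : ℕ} (hp0 : 0 ≤ p) (hp1 : p ≤ 1) (hB : 0 ≤ B)
    (hpow : (1 - p) ^ n < 1)
    (hlast : 1 - (1 - p) ^ n ≤ ((n : ℝ) + B) * (p * (1 - p) ^ (n - 1))) :
    0 ≤ allocation p B n i := by
  unfold allocation
  split_ifs with hin
  · have hdecr : (1 - p) ^ (n - 1) ≤ (1 - p) ^ (i - 1) :=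
      pow_le_pow_of_le_one (by linarith) (by linarith) (by omega)
    have hweight : 1 - (1 - p) ^ n ≤ ((n : ℝ) + B) * (p * (1 - p) ^ (i - 1)) :=
      hlast.trans (by gcongr)
    rw [sub_nonneg, one_le_div (by linarith)]
    exact hweight
  · exact le_rfl

theorem sum_allocation {p B : ℝ} {n N : ℕ} (hpow : (1 - p) ^ n ≠ 1) (hnN : n ≤ N) :
    ∑ i ∈ Icc 1 N, allocation p B n i = B := by
  have hden : 1 - (1 - p) ^ n ≠ 0 := sub_ne_zero.mpr (Ne.symm hpow)
  have hfilter : (Icc 1 N).filter (· ≤ n) = Icc 1 n := by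
    ext i
    simp only [mem_filter, mem_Icc]
    omega
  unfold allocation
  rw [← sum_filter, hfilter, sum_sub_distrib, ← sum_div, ← mul_sum, sum_Icc_mul_one_sub_pow,
    mul_div_cancel_right₀ _ hden, sum_const, Nat.card_Icc, nsmul_one]
  simp

end OptimalAllocation

open OptimalAllocation in
theorem optimal_allocation_feasible_general (p B : ℝ) (hp0 : 0 < p) (hp1 : p < 1) (hB : 0 < B)
    (Nt N : ℕ) (hNt : 0 < Nt) (hNtN : Nt < N)
    (hmin : ∀ m : ℕ, 0 < m → m < Nt → 1 ≤ (1 - p) ^ m * (1 + p * (B + m))) :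
    (∀ i ∈ Finset.Icc 1 N,
      0 ≤ (if i ≤ Nt then ((Nt : ℝ) + B) * (p * (1 - p) ^ (i - 1)) / (1 - (1 - p) ^ Nt) - 1
           else 0)) ∧
    ∑ i ∈ Finset.Icc 1 N,
      (if i ≤ Nt then ((Nt : ℝ) + B) * (p * (1 - p) ^ (i - 1)) / (1 - (1 - p) ^ Nt) - 1
       else 0) = B := by
  have hpow : (1 - p) ^ Nt < 1 := pow_lt_one₀ (by linarith) (by linarith) hNt.ne'
  obtain ⟨m, rfl⟩ : ∃ m, Nt = m + 1 := ⟨Nt - 1, by omega⟩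
  have hprev : 1 ≤ (1 - p) ^ m * (1 + p * (B + m)) := by
    rcases Nat.eq_zero_or_pos m with rfl | hm
    · simp only [pow_zero, Nat.cast_zero, add_zero, one_mul, le_add_iff_nonneg_right]
      positivity
    · exact hmin m hm (by omega)
  exact ⟨fun i _ => allocation_nonneg hp0.le hp1.le hB.le hpow
      (one_sub_pow_succ_le p B m hprev), sum_allocation hpow.ne hNtN.le⟩

/-- Feasibility of the optimal online power allocation: with `Ñ < N` the smallest positive
integer satisfying `(1-p)^Ñ [1+p(B̄+Ñ)] < 1`, the allocation
`E_i = (Ñ+B̄)p(1-p)^(i-1)/(1-(1-p)^Ñ) - 1` for `i ≤ Ñ`, `E_i = 0` for `i > Ñ`,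
satisfies `E_i ≥ 0` and `Σ_{i=1}^N E_i = B̄`. -/
theorem optimal_allocation_feasible (p B : ℝ) (hp0 : 0 < p) (hp1 : p < 1) (hB : 0 < B)
    (Nt N : ℕ) (hNt : 0 < Nt) (hNtN : Nt < N)
    (hlt : (1 - p) ^ Nt * (1 + p * (B + Nt)) < 1)
    (hmin : ∀ m : ℕ, 0 < m → m < Nt → 1 ≤ (1 - p) ^ m * (1 + p * (B + m))) :
    (∀ i ∈ Finset.Icc 1 N,
      0 ≤ (if i ≤ Nt then ((Nt : ℝ) + B) * (p * (1 - p) ^ (i - 1)) / (1 - (1 - p) ^ Nt) - 1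
           else 0)) ∧
    ∑ i ∈ Finset.Icc 1 N,
      (if i ≤ Nt then ((Nt : ℝ) + B) * (p * (1 - p) ^ (i - 1)) / (1 - (1 - p) ^ Nt) - 1
       else 0) = B :=
  optimal_allocation_feasible_general p B hp0 hp1 hB Nt N hNt hNtN hmin
end

section
/- With the optimal allocation E_i = (Ñ+B̄)p(1-p)^{i-1}/(1-(1-p)^{Ñ}) − 1 for 1 ≤ i ≤ Ñ and E_i = 0 otherwise, the value Σ_{i=1}^{Ñ} p(1-p)^{i-1}(1/2)log(1+E_i) equals ((1-(1-p)^{Ñ})/2)·log(p(B̄+Ñ)/(1-(1-p)^{Ñ})) + ((1-p-(1-p)^{Ñ}(1-p+Ñp))/(2p))·log(1-p). -/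
/-! With `q = 1 - p`, the allocation makes `1 + E_i = C q^(i-1)` for the constant
`C = p(B̄+Ñ)/(1-q^Ñ)`, so each logarithm splits as `log C + (i-1) log q`. The value is then a
geometric sum plus an arithmetico-geometric sum, both in closed form. -/

open Finset Real

theorem sum_Icc_one_eq_sum_range {M : Type*} [AddCommMonoid M] (f : ℕ → M) (n : ℕ) :
    ∑ i ∈ Icc 1 n, f i = ∑ k ∈ range n, f (k + 1) := by
  rw [← Ico_add_one_right_eq_Icc, sum_Ico_eq_sum_range, Nat.add_sub_cancel]
  simp only [add_comm 1]

theorem sum_range_mul_pow_mul_one_sub_sq {R : Type*} [CommRing R] (q : R) (n : ℕ) :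
    (∑ k ∈ range n, (k : R) * q ^ k) * (1 - q) ^ 2 = q - n * q ^ n + (n - 1) * q ^ (n + 1) := by
  induction n with
  | zero => simp
  | succ n ih =>
    rw [sum_range_succ, add_mul, ih]
    push_cast
    ring

theorem optimal_allocation_value_general (p B : ℝ) (hp0 : 0 < p) (hp1 : p < 1) (hB : 0 < B)
    (Nt : ℕ) (hNt : 0 < Nt) :
    ∑ i ∈ Finset.Icc 1 Nt, p * (1 - p) ^ (i - 1) *
        (1 / 2 * Real.log (1 +
          (((Nt : ℝ) + B) * (p * (1 - p) ^ (i - 1)) / (1 - (1 - p) ^ Nt) - 1))) =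
      (1 - (1 - p) ^ Nt) / 2 * Real.log (p * (B + Nt) / (1 - (1 - p) ^ Nt)) +
      (1 - p - (1 - p) ^ Nt * (1 - p + Nt * p)) / (2 * p) * Real.log (1 - p) := by
  set q := 1 - p with hq
  set C := p * (B + Nt) / (1 - q ^ Nt)
  have hq0 : 0 < q := by linarith
  have hden : 0 < 1 - q ^ Nt := by
    linarith [pow_lt_one₀ hq0.le (by linarith : q < 1) hNt.ne']
  have hC : 0 < C := by positivity
  have hgeom : p * ∑ k ∈ range Nt, q ^ k = 1 - q ^ Nt := by
    rw [← mul_neg_geom_sum, hq, sub_sub_cancel]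
  have harith : p ^ 2 * ∑ k ∈ range Nt, (k : ℝ) * q ^ k =
      q - Nt * q ^ Nt + (Nt - 1) * q ^ (Nt + 1) := by
    rw [mul_comm, ← sum_range_mul_pow_mul_one_sub_sq, hq, sub_sub_cancel]
  calc _ = ∑ k ∈ range Nt, p * q ^ k * (1 / 2 * log (C * q ^ k)) := by
        rw [sum_Icc_one_eq_sum_range]
        refine sum_congr rfl fun k _ => ?_
        simp only [Nat.add_sub_cancel, C]
        congr 3
        ring
    _ = log C / 2 * (p * ∑ k ∈ range Nt, q ^ k) +
          log q / (2 * p) * (p ^ 2 * ∑ k ∈ range Nt, (k : ℝ) * q ^ k) := by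
        simp only [mul_sum, ← sum_add_distrib]
        refine sum_congr rfl fun k _ => ?_
        rw [log_mul hC.ne' (pow_pos hq0 k).ne', log_pow]
        field_simp
    _ = _ := by
        rw [hgeom, harith]
        field_simp
        ring

/-- Value of the optimal online power allocation:
`Σ_{i=1}^Ñ p(1-p)^(i-1)(1/2)log(1+E_i)` equals the closed-form expression
`((1-(1-p)^Ñ)/2) log(p(B̄+Ñ)/(1-(1-p)^Ñ)) + ((1-p-(1-p)^Ñ(1-p+Ñp))/(2p)) log(1-p)`. -/
theorem optimal_allocation_value (p B : ℝ) (hp0 : 0 < p) (hp1 : p < 1) (hB : 0 < B)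
    (Nt : ℕ) (hNt : 0 < Nt)
    (hlt : (1 - p) ^ Nt * (1 + p * (B + Nt)) < 1)
    (hmin : ∀ m : ℕ, 0 < m → m < Nt → 1 ≤ (1 - p) ^ m * (1 + p * (B + m))) :
    ∑ i ∈ Finset.Icc 1 Nt, p * (1 - p) ^ (i - 1) *
        (1 / 2 * Real.log (1 +
          (((Nt : ℝ) + B) * (p * (1 - p) ^ (i - 1)) / (1 - (1 - p) ^ Nt) - 1))) =
      (1 - (1 - p) ^ Nt) / 2 * Real.log (p * (B + Nt) / (1 - (1 - p) ^ Nt)) +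
      (1 - p - (1 - p) ^ Nt * (1 - p + Nt * p)) / (2 * p) * Real.log (1 - p) :=
  optimal_allocation_value_general p B hp0 hp1 hB Nt hNt
end

section
/- For 0 < p < 1 and B̄ > 0, Σ_{k=1}^{∞} p²(1-p)^{k-1}·(k/2)·log(1 + B̄/k) converges and is at most (1/2)log(1+pB̄). -/
/-!
The weights `w k = p² (1-p)^k (k+1)` form a probability distribution on `ℕ`, and
`∑ w k (1 + B/(k+1)) = 1 + p B`. The series is `½ ∑ w k log (1 + B/(k+1))`, so Jensen's
inequality for the concave `log` (proved by integrating its tangent line at the mean) bounds it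
by `½ log (1 + p B)`.
-/

open Real

theorem Real.log_le_log_add_sub_div {x a : ℝ} (hx : 0 < x) (ha : 0 < a) :
    log x ≤ log a + (x - a) / a := by
  have h := log_le_sub_one_of_pos (div_pos hx ha)
  rw [log_div hx.ne' ha.ne'] at h
  rw [sub_div, div_self ha.ne']
  linarith

theorem Real.summable_mul_log_and_tsum_mul_log_le {ι : Type*} {w x : ι → ℝ} {m : ℝ}
    (hw : ∀ i, 0 ≤ w i) (hx : ∀ i, 1 ≤ x i) (hw1 : HasSum w 1)
    (hwx : HasSum (fun i => w i * x i) m) :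
    Summable (fun i => w i * log (x i)) ∧ ∑' i, w i * log (x i) ≤ log m := by
  have hm : 1 ≤ m := hasSum_le (fun i => le_mul_of_one_le_right (hw i) (hx i)) hw1 hwx
  have hm0 : 0 < m := one_pos.trans_le hm
  -- the tangent line of `log` at `m` integrates to `log m`
  have htangent : HasSum (fun i => w i * log m + w i * x i / m - w i) (log m) := by
    convert! ((hw1.mul_right (log m)).add (hwx.div_const m)).sub hw1 using 1
    rw [div_self hm0.ne']
    ring
  have hle : ∀ i, w i * log (x i) ≤ w i * log m + w i * x i / m - w i := fun i => by
    calc w i * log (x i) ≤ w i * (log m + (x i - m) / m) :=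
          mul_le_mul_of_nonneg_left (log_le_log_add_sub_div (one_pos.trans_le (hx i)) hm0) (hw i)
      _ = w i * log m + w i * x i / m - w i := by field_simp; ring
  have hsum : Summable (fun i => w i * log (x i)) :=
    htangent.summable.of_nonneg_of_le (fun i => mul_nonneg (hw i) (log_nonneg (hx i))) hle
  exact ⟨hsum, htangent.tsum_eq ▸ hsum.tsum_le_tsum hle htangent.summable⟩

theorem hasSum_sq_mul_geometric_mul_succ {p : ℝ} (hp : |1 - p| < 1) :
    HasSum (fun k : ℕ => p ^ 2 * (1 - p) ^ k * ((k : ℝ) + 1)) 1 := by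
  have hp0 : p ≠ 0 := by rintro rfl; simp at hp
  convert! (hasSum_choose_mul_geometric_of_norm_lt_one 1 (r := 1 - p) hp).mul_left (p ^ 2)
    using 1
  · ext k
    simp only [Nat.choose_one_right, Nat.cast_add, Nat.cast_one]
    ring
  · rw [sub_sub_cancel]
    field_simp

/-- The noncausal upper bound series `Σ_{k≥1} p²(1-p)^(k-1) (k/2) log(1+B̄/k)` converges
and is at most `(1/2) log(1+pB̄)` (1-based `k` encoded as `k+1`). -/
theorem noncausal_upper_bound (p B : ℝ) (hp0 : 0 < p) (hp1 : p < 1) (hB : 0 < B) :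
    Summable (fun k : ℕ =>
      p ^ 2 * (1 - p) ^ k * (((k : ℝ) + 1) / 2 * Real.log (1 + B / ((k : ℝ) + 1)))) ∧
    (∑' k : ℕ,
      p ^ 2 * (1 - p) ^ k * (((k : ℝ) + 1) / 2 * Real.log (1 + B / ((k : ℝ) + 1)))) ≤
      1 / 2 * Real.log (1 + p * B) := by
  have hr : |1 - p| < 1 := abs_sub_lt_iff.2 ⟨by linarith, by linarith⟩
  set w : ℕ → ℝ := fun k => p ^ 2 * (1 - p) ^ k * ((k : ℝ) + 1)
  have hw1 : HasSum w 1 := hasSum_sq_mul_geometric_mul_succ hr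
  have hgeom : HasSum (fun k : ℕ => p ^ 2 * (1 - p) ^ k) p := by
    convert! (hasSum_geometric_of_abs_lt_one hr).mul_left (p ^ 2) using 1
    rw [sub_sub_cancel]
    field_simp
  have hwx : HasSum (fun k : ℕ => w k * (1 + B / ((k : ℝ) + 1))) (1 + p * B) := by
    convert! hw1.add (hgeom.mul_right B) using 1
    ext k
    simp only [w]
    field_simp
  obtain ⟨hsum, hle⟩ := Real.summable_mul_log_and_tsum_mul_log_le
    (fun k => by positivity) (fun k => le_add_of_nonneg_right (by positivity)) hw1 hwx
  have hterm : ∀ k : ℕ, p ^ 2 * (1 - p) ^ k * (((k : ℝ) + 1) / 2 * log (1 + B / ((k : ℝ) + 1)))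
      = 1 / 2 * (w k * log (1 + B / ((k : ℝ) + 1))) := fun k => by simp only [w]; ring
  simp_rw [hterm]
  exact ⟨hsum.mul_left _, by rw [tsum_mul_left]; gcongr⟩
end
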